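/- Let θ ∈ (0, π/2] and define λ₁ = 1/(2+2cos θ), λ = (3+4cos θ)/(6+6cos θ), cos γ = −1/(3+4cos θ), and the four operators α₁ = (λ₁/2)(I + Z), α_a = (λ/2)(I + cos γ · Z + sin γ (cos δ_a · X + sin δ_a · Y)) for a = 2,3,4 with δ₂, δ₃, δ₄ = 0, 2π/3, 4π/3 and sin γ = sqrt(1 − cos²γ) ≥ 0. Then {α₁, α₂, α₃, α₄} is a POVM (each α_a is positive semidefinite and ∑_a α_a = I), and Tr[α_a ρ] = 1/4 for all a, where ρ = (1/2)(I + cos θ · Z). -/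

import Mathlib

open Matrix
open scoped ComplexOrder

noncomputable def PauliX : Matrix (Fin 2) (Fin 2) ℂ := !![0, 1; 1, 0]
noncomputable def PauliY : Matrix (Fin 2) (Fin 2) ℂ := !![0, -Complex.I; Complex.I, 0]
noncomputable def PauliZ : Matrix (Fin 2) (Fin 2) ℂ := !![1, 0; 0, -1]

noncomputable def cgam (θ : ℝ) : ℝ := -(1 / (3 + 4 * Real.cos θ))
noncomputable def sgam (θ : ℝ) : ℝ := Real.sqrt (1 - cgam θ ^ 2)
noncomputable def lam1 (θ : ℝ) : ℝ := 1 / (2 + 2 * Real.cos θ)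
noncomputable def lamA (θ : ℝ) : ℝ := (3 + 4 * Real.cos θ) / (6 + 6 * Real.cos θ)
noncomputable def deltaA : Fin 4 → ℝ := ![0, 0, 2 * Real.pi / 3, 4 * Real.pi / 3]

/-- The adjusted tetrahedral POVM. -/
noncomputable def alphaA (θ : ℝ) : Fin 4 → Matrix (Fin 2) (Fin 2) ℂ := fun a =>
  if a = 0 then ((lam1 θ / 2 : ℝ) : ℂ) • ((1 : Matrix (Fin 2) (Fin 2) ℂ) + PauliZ)
  else ((lamA θ / 2 : ℝ) : ℂ) •
    ((1 : Matrix (Fin 2) (Fin 2) ℂ) + (cgam θ : ℂ) • PauliZ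
      + (sgam θ : ℂ) • ((Real.cos (deltaA a) : ℂ) • PauliX + (Real.sin (deltaA a) : ℂ) • PauliY))

/-- Alice's reduced state of `|ψ_θ⟩`. -/
noncomputable def rhoA (θ : ℝ) : Matrix (Fin 2) (Fin 2) ℂ :=
  (1 / 2 : ℂ) • ((1 : Matrix (Fin 2) (Fin 2) ℂ) + (Real.cos θ : ℂ) • PauliZ)

/-!
Every outcome is a nonnegative multiple of `I + n·σ` for a unit Bloch vector `n`, and
`I + n·σ = v v†` for an explicit `v`, which gives positivity. The three outcomes with
`δ = 0, 2π/3, 4π/3` share `n_z = cos γ` and their `X`, `Y` components cancel, so the completeness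
relation reduces to two scalar identities in `cos θ`; likewise `Tr[(I + n·σ) ρ] = 1 + n_z cos θ`
turns each outcome probability into a scalar identity.
-/

/-- `I + n·σ` for the unit vector `n = (√(1 - g²) cos d, √(1 - g²) sin d, g)`. -/
noncomputable def pureBloch (g d : ℝ) : Matrix (Fin 2) (Fin 2) ℂ :=
  1 + (g : ℂ) • PauliZ
    + (Real.sqrt (1 - g ^ 2) : ℂ) • ((Real.cos d : ℂ) • PauliX + (Real.sin d : ℂ) • PauliY)

noncomputable def blochVector (g d : ℝ) : Fin 2 → ℂ :=
  ![(√(1 + g) : ℂ), √(1 - g) * (Real.cos d + Real.sin d * Complex.I)]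

theorem pureBloch_eq_vecMulVec {g : ℝ} (hg : |g| ≤ 1) (d : ℝ) :
    pureBloch g d = vecMulVec (blochVector g d) (star (blochVector g d)) := by
  obtain ⟨hg₁, hg₂⟩ := abs_le.mp hg
  have hplus : ((√(1 + g) : ℝ) : ℂ) ^ 2 = 1 + g := by
    rw [← Complex.ofReal_pow, Real.sq_sqrt (by linarith)]; push_cast; ring
  have hminus : ((√(1 - g) : ℝ) : ℂ) ^ 2 = 1 - g := by
    rw [← Complex.ofReal_pow, Real.sq_sqrt (by linarith)]; push_cast; ring
  have hprod : ((√(1 - g ^ 2) : ℝ) : ℂ) = √(1 + g) * √(1 - g) := by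
    rw [← Complex.ofReal_mul, ← Real.sqrt_mul (by linarith)]; ring_nf
  have hcs : (Real.cos d : ℂ) ^ 2 + (Real.sin d : ℂ) ^ 2 = 1 := by
    exact_mod_cast Real.cos_sq_add_sin_sq d
  ext i j
  fin_cases i <;> fin_cases j <;>
    simp [pureBloch, blochVector, PauliX, PauliY, PauliZ, vecMulVec_apply, Complex.conj_ofReal,
      hprod, -Complex.ofReal_cos, -Complex.ofReal_sin]
  · linear_combination -hplus
  · ring
  · ring
  · linear_combination -hminus - (√(1 - g) : ℂ) ^ 2 * hcs
      + (√(1 - g) * (Real.sin d : ℂ)) ^ 2 * Complex.I_sq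

theorem pureBloch_posSemidef {g : ℝ} (hg : |g| ≤ 1) (d : ℝ) : (pureBloch g d).PosSemidef := by
  rw [pureBloch_eq_vecMulVec hg]
  exact posSemidef_vecMulVec_self_star _

theorem pureBloch_trine_sum (g : ℝ) :
    pureBloch g 0 + pureBloch g (2 * Real.pi / 3) + pureBloch g (4 * Real.pi / 3)
      = (3 : ℂ) • (1 + (g : ℂ) • PauliZ) := by
  have h4π : 4 * Real.pi / 3 = 2 * Real.pi - 2 * Real.pi / 3 := by ring
  have hcos : Real.cos (2 * Real.pi / 3) = -(1 / 2) := by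
    rw [show 2 * Real.pi / 3 = Real.pi - Real.pi / 3 by ring, Real.cos_pi_sub,
      Real.cos_pi_div_three]
  simp only [pureBloch, h4π, Real.cos_two_pi_sub, Real.sin_two_pi_sub, Real.cos_zero,
    Real.sin_zero, hcos]
  push_cast
  module

theorem trace_pureBloch_mul_rhoA (g d θ : ℝ) :
    (pureBloch g d * rhoA θ).trace = 1 + g * Real.cos θ := by
  simp [pureBloch, rhoA, Matrix.trace, Matrix.mul_apply, PauliX, PauliY, PauliZ,
    -Complex.ofReal_cos, -Complex.ofReal_sin]
  ring

theorem alphaA_zero (θ : ℝ) : alphaA θ 0 = ((lam1 θ / 2 : ℝ) : ℂ) • pureBloch 1 0 := by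
  simp [alphaA, pureBloch]

theorem alphaA_of_ne_zero (θ : ℝ) {a : Fin 4} (ha : a ≠ 0) :
    alphaA θ a = ((lamA θ / 2 : ℝ) : ℂ) • pureBloch (cgam θ) (deltaA a) := by
  simp [alphaA, pureBloch, ha, sgam]

theorem sum_alphaA (θ : ℝ) :
    ∑ a, alphaA θ a = ((lam1 θ / 2 : ℝ) : ℂ) • (1 + PauliZ)
      + ((lamA θ / 2 : ℝ) : ℂ) • (3 : ℂ) • (1 + (cgam θ : ℂ) • PauliZ) := by
  rw [Fin.sum_univ_four, ← pureBloch_trine_sum, alphaA_zero, alphaA_of_ne_zero θ one_ne_zero,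
    alphaA_of_ne_zero θ (by decide), alphaA_of_ne_zero θ (by decide)]
  simp [deltaA, pureBloch]
  module

theorem lam1_nonneg (θ : ℝ) : 0 ≤ lam1 θ := by
  have := Real.neg_one_le_cos θ
  unfold lam1; apply div_nonneg <;> linarith

section
variable {θ : ℝ}

theorem lamA_nonneg (hc : -1 / 2 ≤ Real.cos θ) : 0 ≤ lamA θ := by
  unfold lamA; apply div_nonneg <;> linarith

theorem abs_cgam_le_one (hc : -1 / 2 ≤ Real.cos θ) : |cgam θ| ≤ 1 := by
  have : 0 < 3 + 4 * Real.cos θ := by linarith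
  rw [cgam, abs_neg, abs_of_pos (by positivity), div_le_one this]; linarith

theorem lam1_add_three_mul_lamA (hc : -1 / 2 ≤ Real.cos θ) : lam1 θ + 3 * lamA θ = 2 := by
  have : 1 + Real.cos θ ≠ 0 := by linarith
  unfold lam1 lamA; grind

theorem lam1_add_three_mul_lamA_mul_cgam (hc : -1 / 2 ≤ Real.cos θ) :
    lam1 θ + 3 * lamA θ * cgam θ = 0 := by
  have : 1 + Real.cos θ ≠ 0 := by linarith
  have : 3 + 4 * Real.cos θ ≠ 0 := by linarith
  unfold lam1 lamA cgam; grind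

theorem lam1_div_two_mul_one_add_cos (hc : -1 / 2 ≤ Real.cos θ) :
    lam1 θ / 2 * (1 + Real.cos θ) = 1 / 4 := by
  have : 1 + Real.cos θ ≠ 0 := by linarith
  unfold lam1; grind

theorem lamA_div_two_mul_one_add_cgam_mul_cos (hc : -1 / 2 ≤ Real.cos θ) :
    lamA θ / 2 * (1 + cgam θ * Real.cos θ) = 1 / 4 := by
  have : 1 + Real.cos θ ≠ 0 := by linarith
  have : 3 + 4 * Real.cos θ ≠ 0 := by linarith
  unfold lamA cgam; grind

theorem alphaA_posSemidef (hc : -1 / 2 ≤ Real.cos θ) (a : Fin 4) : (alphaA θ a).PosSemidef := by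
  rcases eq_or_ne a 0 with rfl | ha
  · rw [alphaA_zero]
    exact (pureBloch_posSemidef (by simp) 0).smul
      (Complex.zero_le_real.mpr (by linarith [lam1_nonneg θ]))
  · rw [alphaA_of_ne_zero θ ha]
    exact (pureBloch_posSemidef (abs_cgam_le_one hc) _).smul
      (Complex.zero_le_real.mpr (by linarith [lamA_nonneg hc]))

theorem sum_alphaA_eq_one (hc : -1 / 2 ≤ Real.cos θ) : ∑ a, alphaA θ a = 1 := by
  have hI : ((lam1 θ / 2 : ℝ) : ℂ) + 3 * ((lamA θ / 2 : ℝ) : ℂ) = 1 := by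
    norm_cast; linarith [lam1_add_three_mul_lamA hc]
  have hZ : ((lam1 θ / 2 : ℝ) : ℂ) + 3 * ((lamA θ / 2 : ℝ) : ℂ) * cgam θ = 0 := by
    norm_cast; linarith [lam1_add_three_mul_lamA_mul_cgam hc]
  rw [sum_alphaA]
  linear_combination (norm := module) hI • (1 : Matrix (Fin 2) (Fin 2) ℂ) + hZ • PauliZ

theorem trace_alphaA_mul_rhoA (hc : -1 / 2 ≤ Real.cos θ) (a : Fin 4) :
    (alphaA θ a * rhoA θ).trace = 1 / 4 := by
  rcases eq_or_ne a 0 with rfl | ha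
  · rw [alphaA_zero, smul_mul, trace_smul, trace_pureBloch_mul_rhoA, smul_eq_mul]
    norm_cast
    rw [one_mul, lam1_div_two_mul_one_add_cos hc]
    norm_num
  · rw [alphaA_of_ne_zero θ ha, smul_mul, trace_smul, trace_pureBloch_mul_rhoA, smul_eq_mul]
    norm_cast
    rw [lamA_div_two_mul_one_add_cgam_mul_cos hc]
    norm_num

end

/-- The adjusted tetrahedral measurement is a POVM, each outcome having probability `1/4`
on the reduced state of `|ψ_θ⟩`. -/
theorem alphaA_povm_uniform (θ : ℝ) (h1 : 0 < θ) (h2 : θ ≤ Real.pi / 2) :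
    (∀ a, (alphaA θ a).PosSemidef) ∧ (∑ a, alphaA θ a) = 1
      ∧ ∀ a, (alphaA θ a * rhoA θ).trace = 1 / 4 := by
  have hc : -1 / 2 ≤ Real.cos θ := by
    have := Real.cos_nonneg_of_mem_Icc ⟨by linarith [Real.pi_pos], h2⟩
    linarith
  exact ⟨alphaA_posSemidef hc, sum_alphaA_eq_one hc, trace_alphaA_mul_rhoA hc⟩
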